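/- Let A, B, α, β be positive real numbers with α > β and β ∈ (0,1), and let ε_1(n), ε_2(n) be sequences tending to 0 as n → ∞. Suppose Δ_n, n = 0,1,2,…, is a sequence of nonnegative real numbers satisfying Δ_0 = 0 and the recurrence Δ_n = (A/n^α)(1 + ε_1(n)) + Δ_{n−1}(1 − (B/n^β)(1 + ε_2(n))) for all n ≥ 1. Then lim_{n→∞} n^{α−β} Δ_n = A/B. -/

import Mathlib

/-!
Writing `x n = n ^ (α - β) * Δ n`, the recursion becomes
`x (n + 1) = (1 - r n) * x n + r n * z n` with weights `r n ≈ B / n ^ β` and targets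
`z n → A / B`; the rescaling factor `((n + 1) / n) ^ (α - β) = 1 + O(1 / n)` only perturbs
`r n` by `o(n ^ (-β))` because `β < 1`. The weights are not summable, so the excess of
`|x n - A / B|` over any tolerance is eventually damped by `∏ (1 - r k) ≤ exp (-∑ r k) → 0`.
-/

open Filter Topology Finset Asymptotics

theorem tendsto_zero_of_le_one_sub_mul {u r : ℕ → ℝ} (hu : ∀ n, 0 ≤ u n) (hr : ∀ n, 0 ≤ r n)
    (hsum : ¬ Summable r) (hstep : ∀ n, u (n + 1) ≤ (1 - r n) * u n) :
    Tendsto u atTop (𝓝 0) := by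
  have hbound : ∀ n, u n ≤ u 0 * Real.exp (-∑ i ∈ range n, r i) := by
    intro n
    induction n with
    | zero => simp
    | succ n ih =>
      calc u (n + 1) ≤ (1 - r n) * u n := hstep n
        _ ≤ Real.exp (-r n) * u n := by
          gcongr
          · exact hu n
          · linarith [Real.add_one_le_exp (-r n)]
        _ ≤ Real.exp (-r n) * (u 0 * Real.exp (-∑ i ∈ range n, r i)) := by gcongr
        _ = u 0 * Real.exp (-∑ i ∈ range (n + 1), r i) := by
          rw [sum_range_succ, neg_add, Real.exp_add]; ring
  have hS := (not_summable_iff_tendsto_nat_atTop_of_nonneg hr).1 hsum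
  have hexp := (Real.tendsto_exp_neg_atTop_nhds_zero.comp hS).const_mul (u 0)
  rw [mul_zero] at hexp
  exact squeeze_zero hu hbound hexp

theorem tendsto_of_eq_one_sub_mul_add_mul {y r z : ℕ → ℝ} {L : ℝ}
    (hr : ∀ᶠ n in atTop, 0 ≤ r n ∧ r n ≤ 1) (hsum : ¬ Summable r)
    (hz : Tendsto z atTop (𝓝 L))
    (hy : ∀ᶠ n in atTop, y (n + 1) = (1 - r n) * y n + r n * z n) :
    Tendsto y atTop (𝓝 L) := by
  rw [Metric.tendsto_atTop]
  intro ε hε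
  obtain ⟨N, hN⟩ := eventually_atTop.1
    (hr.and (hy.and (hz.eventually (Metric.closedBall_mem_nhds L (half_pos hε)))))
  set u : ℕ → ℝ := fun n => max (|y (n + N) - L| - ε / 2) 0
  have hstep : ∀ n, u (n + 1) ≤ (1 - r (n + N)) * u n := by
    intro n
    obtain ⟨⟨hr0, hr1⟩, hyn, hzn⟩ := hN (n + N) le_add_self
    rw [Real.dist_eq] at hzn
    have hdist : |y (n + 1 + N) - L| ≤ (1 - r (n + N)) * |y (n + N) - L| + r (n + N) * (ε / 2) :=
      calc |y (n + 1 + N) - L|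
          = |(1 - r (n + N)) * (y (n + N) - L) + r (n + N) * (z (n + N) - L)| := by
            rw [add_right_comm, hyn]; ring_nf
        _ ≤ (1 - r (n + N)) * |y (n + N) - L| + r (n + N) * (ε / 2) := by
            refine (abs_add_le _ _).trans ?_
            rw [abs_mul, abs_mul, abs_of_nonneg hr0, abs_of_nonneg (sub_nonneg.2 hr1)]
            gcongr
    refine max_le ?_ (mul_nonneg (sub_nonneg.2 hr1) (le_max_right _ _))
    nlinarith [le_max_left (|y (n + N) - L| - ε / 2) 0]
  have hu : Tendsto u atTop (𝓝 0) :=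
    tendsto_zero_of_le_one_sub_mul (fun n => le_max_right _ _)
      (fun n => (hN (n + N) le_add_self).1.1) (by rwa [summable_nat_add_iff N]) hstep
  obtain ⟨M, hM⟩ := eventually_atTop.1 (hu.eventually (gt_mem_nhds (half_pos hε)))
  refine ⟨M + N, fun n hn => ?_⟩
  obtain ⟨k, rfl⟩ : ∃ k, n = k + N := ⟨n - N, by omega⟩
  have := (le_max_left _ _).trans_lt (hM k (by omega))
  rw [Real.dist_eq]
  linarith

theorem tendsto_natCast_add_one_rpow_atTop {β : ℝ} (hβ : 0 < β) :
    Tendsto (fun n : ℕ => ((n : ℝ) + 1) ^ β) atTop atTop :=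
  (tendsto_rpow_atTop hβ).comp (tendsto_atTop_add_const_right _ 1 tendsto_natCast_atTop_atTop)

theorem not_summable_div_natCast_add_one_rpow {s : ℕ → ℝ} {B β : ℝ} (hB : 0 < B) (hβ : β ≤ 1)
    (hs : Tendsto s atTop (𝓝 B)) :
    ¬ Summable (fun n : ℕ => s n / ((n : ℝ) + 1) ^ β) := by
  intro h
  have hp : Summable (fun n : ℕ => 1 / |(n : ℝ) + 1| ^ β) := by
    refine (h.mul_left (2 / B)).of_norm_bounded_eventually_nat ?_
    filter_upwards [hs.eventually (le_mem_nhds (half_lt_self hB))] with n hn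
    have hp : 0 < ((n : ℝ) + 1) ^ β := by positivity
    rw [abs_of_pos (by positivity : (0 : ℝ) < n + 1), Real.norm_of_nonneg (by positivity),
      ← mul_div_assoc, div_le_div_iff_of_pos_right hp, div_mul_eq_mul_div,
      le_div_iff₀ hB]
    linarith
  exact absurd ((Real.summable_one_div_nat_add_rpow 1 β).1 hp) (not_lt.2 hβ)

theorem tendsto_div_of_eq_one_sub_div_rpow {y s a : ℕ → ℝ} {A B β : ℝ} (hB : 0 < B)
    (hβ0 : 0 < β) (hβ1 : β ≤ 1) (hs : Tendsto s atTop (𝓝 B)) (ha : Tendsto a atTop (𝓝 A))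
    (hy : ∀ᶠ n in atTop,
      y (n + 1) = (1 - s n / ((n : ℝ) + 1) ^ β) * y n + a n / ((n : ℝ) + 1) ^ β) :
    Tendsto y atTop (𝓝 (A / B)) := by
  have hs_pos : ∀ᶠ n in atTop, 0 < s n := hs.eventually (lt_mem_nhds hB)
  have hs_le : ∀ᶠ n in atTop, s n ≤ ((n : ℝ) + 1) ^ β :=
    ((hs.eventually (ge_mem_nhds (lt_add_one B))).and
      ((tendsto_natCast_add_one_rpow_atTop hβ0).eventually_ge_atTop (B + 1))).mono
      fun n h => h.1.trans h.2
  refine tendsto_of_eq_one_sub_mul_add_mul (z := fun n => a n / s n) ?_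
    (not_summable_div_natCast_add_one_rpow hB hβ1 hs) (ha.div hs hB.ne') ?_
  · filter_upwards [hs_pos, hs_le] with n hpos hle
    exact ⟨by positivity, div_le_one_of_le₀ hle (by positivity)⟩
  · filter_upwards [hy, hs_pos] with n hyn hpos
    rw [hyn]
    congr 1
    field_simp

theorem tendsto_natCast_add_one_rpow_mul_div_rpow_sub_one {β : ℝ} (hβ : β < 1) (γ : ℝ) :
    Tendsto (fun n : ℕ => ((n : ℝ) + 1) ^ β * ((((n : ℝ) + 1) / n) ^ γ - 1)) atTop (𝓝 0) := by
  -- `((n + 1) / n) ^ γ = (1 - t) ^ (-γ)` at `t = 1 / (n + 1)`, and this is `1 + O(t)`.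
  have hf : DifferentiableAt ℝ (fun t : ℝ => (1 - t) ^ (-γ)) 0 :=
    (differentiableAt_const _ |>.sub differentiableAt_id).rpow_const (Or.inl (by norm_num))
  have hO := (isBigO_refl (fun n : ℕ => ((n : ℝ) + 1) ^ β) atTop).mul
    (hf.isBigO_sub.comp_tendsto tendsto_one_div_add_atTop_nhds_zero_nat)
  have hlim : Tendsto (fun n : ℕ => ((n : ℝ) + 1) ^ β * (1 / ((n : ℝ) + 1) - 0)) atTop (𝓝 0) := by
    refine ((tendsto_natCast_add_one_rpow_atTop (sub_pos.2 hβ)).inv_tendsto_atTop).congr fun n => ?_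
    have hn : (0 : ℝ) < n + 1 := by positivity
    rw [Pi.inv_apply, ← Real.rpow_neg hn.le, neg_sub, Real.rpow_sub_one hn.ne']
    ring
  refine (hO.trans_tendsto hlim).congr' ?_
  filter_upwards [eventually_ge_atTop 1] with n hn
  have hn : (0 : ℝ) < n := by exact_mod_cast hn
  simp only [Function.comp_apply, sub_zero, Real.one_rpow]
  rw [one_sub_div (by positivity), add_sub_cancel_right, Real.rpow_neg (by positivity),
    ← Real.inv_rpow (by positivity), inv_div]

theorem tendsto_natCast_add_one_div_rpow (γ : ℝ) :
    Tendsto (fun n : ℕ => (((n : ℝ) + 1) / n) ^ γ) atTop (𝓝 1) := by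
  have h : Tendsto (fun n : ℕ => ((n : ℝ) + 1) / n) atTop (𝓝 1) := by
    have h₁ := tendsto_one_div_atTop_nhds_zero_nat.const_add (1 : ℝ)
    rw [add_zero] at h₁
    refine h₁.congr' ?_
    filter_upwards [eventually_ge_atTop 1] with n hn
    rw [add_div, div_self (by positivity), one_div]
  simpa using h.rpow_const (Or.inl one_ne_zero)

theorem recursive_sequence_asymptotics_general
    (A B α β : ℝ) (hB : 0 < B) (hβ0 : 0 < β) (hβ1 : β < 1)
    (ε₁ ε₂ : ℕ → ℝ)
    (hε₁ : Tendsto ε₁ atTop (nhds 0)) (hε₂ : Tendsto ε₂ atTop (nhds 0))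
    (Δ : ℕ → ℝ)
    (hrec : ∀ n : ℕ, 1 ≤ n →
      Δ n = A / (n : ℝ) ^ α * (1 + ε₁ n) +
        Δ (n - 1) * (1 - B / (n : ℝ) ^ β * (1 + ε₂ n))) :
    Tendsto (fun n : ℕ => (n : ℝ) ^ (α - β) * Δ n) atTop (nhds (A / B)) := by
  set ρ : ℕ → ℝ := fun n => (((n : ℝ) + 1) / n) ^ (α - β)
  have hL := tendsto_natCast_add_one_rpow_mul_div_rpow_sub_one hβ1 (α - β)
  have hε₁' := (hε₁.comp (tendsto_add_atTop_nat 1)).const_add 1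
  have hε₂' := (hε₂.comp (tendsto_add_atTop_nat 1)).const_add 1
  refine tendsto_div_of_eq_one_sub_div_rpow hB hβ0 hβ1.le
    (s := fun n => ρ n * (B * (1 + ε₂ (n + 1))) - ((n : ℝ) + 1) ^ β * (ρ n - 1))
    (a := fun n => A * (1 + ε₁ (n + 1))) ?_ ?_ ?_
  · simpa using ((tendsto_natCast_add_one_div_rpow _).mul (hε₂'.const_mul B)).sub hL
  · simpa using hε₁'.const_mul A
  · filter_upwards [eventually_ge_atTop 1] with n hn
    have hn : (0 : ℝ) < n := by exact_mod_cast hn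
    have hρn : ρ n * (n : ℝ) ^ (α - β) = ((n : ℝ) + 1) ^ (α - β) := by
      rw [show ρ n = _ from Real.div_rpow (by positivity) hn.le _, div_mul_cancel₀ _ (by positivity)]
    have hρ0 : ρ n ≠ 0 := (Real.rpow_pos_of_pos (div_pos (by positivity) hn) _).ne'
    have hsplit : ((n : ℝ) + 1) ^ α = ((n : ℝ) + 1) ^ β * ((n : ℝ) + 1) ^ (α - β) := by
      rw [← Real.rpow_add (by positivity), add_sub_cancel]
    rw [hrec (n + 1) le_add_self, Nat.add_sub_cancel]
    push_cast
    rw [hsplit, ← hρn]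
    field_simp
    ring

/-- Lemma 1 of Vatutin–Dyakonova: if `Δ_n` is a nonnegative sequence with `Δ_0 = 0`
satisfying `Δ_n = (A/n^α)(1+ε₁(n)) + Δ_{n-1}(1 - (B/n^β)(1+ε₂(n)))` for positive
`A, B, α, β` with `α > β`, `β ∈ (0,1)`, and `ε₁, ε₂ → 0`, then
`n^{α-β} Δ_n → A/B`. -/
theorem recursive_sequence_asymptotics
    (A B α β : ℝ) (hA : 0 < A) (hB : 0 < B) (hα : 0 < α) (hβ0 : 0 < β)
    (hβα : β < α) (hβ1 : β < 1)
    (ε₁ ε₂ : ℕ → ℝ)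
    (hε₁ : Tendsto ε₁ atTop (nhds 0)) (hε₂ : Tendsto ε₂ atTop (nhds 0))
    (Δ : ℕ → ℝ) (hΔnonneg : ∀ n, 0 ≤ Δ n) (hΔ0 : Δ 0 = 0)
    (hrec : ∀ n : ℕ, 1 ≤ n →
      Δ n = A / (n : ℝ) ^ α * (1 + ε₁ n) +
        Δ (n - 1) * (1 - B / (n : ℝ) ^ β * (1 + ε₂ n))) :
    Tendsto (fun n : ℕ => (n : ℝ) ^ (α - β) * Δ n) atTop (nhds (A / B)) :=
  recursive_sequence_asymptotics_general A B α β hB hβ0 hβ1 ε₁ ε₂ hε₁ hε₂ Δ hrec
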